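/- Suppose θ and φ are two inner functions and g ∈ H^∞ is a function with 1/g ∈ H^∞ such that θ/φ = g/\bar{g} holds m-a.e. on T. Then for every 1 ≤ p ≤ ∞ one has K^p_θ = g·K^p_φ := { g·h : h ∈ K^p_φ }. -/

import Mathlib

open MeasureTheory Complex Set Metric ENNReal

noncomputable section

/-- Normalized Lebesgue (arclength) measure `m` on the unit circle `T`, as a measure on `ℂ`. -/
def circleMeasure : Measure ℂ :=
  (ENNReal.ofReal (2 * Real.pi))⁻¹ •
    Measure.map (fun t : ℝ => Complex.exp (t * Complex.I)) (volume.restrict (Ioc 0 (2 * Real.pi)))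

/-- The open unit disk `D`. -/
def unitDisk : Set ℂ := ball (0 : ℂ) 1

/-- `g` is, `m`-a.e. on the circle, the (radial) boundary-value function of `f`. -/
def IsBoundaryValue (f g : ℂ → ℂ) : Prop :=
  ∀ᵐ ζ ∂circleMeasure,
    Filter.Tendsto (fun r : ℝ => f (((r : ℂ)) * ζ)) (nhdsWithin 1 (Iio 1)) (nhds (g ζ))

/-- The Hardy norm `‖f‖_p`; for `p = ∞` it is the sup norm over the disk. -/
def hNorm (p : ℝ≥0∞) (f : ℂ → ℂ) : ℝ≥0∞ :=
  if p = ⊤ then ⨆ z : unitDisk, (‖f (z : ℂ)‖₊ : ℝ≥0∞)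
  else ⨆ r : Ioo (0 : ℝ) 1,
    (∫⁻ ζ, (‖f ((((r : ℝ) : ℂ)) * ζ)‖₊ : ℝ≥0∞) ^ p.toReal ∂circleMeasure) ^ (1 / p.toReal)

/-- Membership in the Hardy space `H^p` (with `f` identified with its boundary values,
i.e. the values of `f` on the circle are `m`-a.e. its radial limits from the disk). -/
def MemHp (p : ℝ≥0∞) (f : ℂ → ℂ) : Prop :=
  DifferentiableOn ℂ f unitDisk ∧ hNorm p f < ⊤ ∧ IsBoundaryValue f f

/-- Inner functions: bounded holomorphic with unimodular boundary values. -/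
def IsInner (θ : ℂ → ℂ) : Prop :=
  MemHp ⊤ θ ∧ ∀ᵐ ζ ∂circleMeasure, ‖θ ζ‖ = 1

/-- `θ` is nonconstant on the unit disk. -/
def Nonconstant (θ : ℂ → ℂ) : Prop := ¬ ∃ c : ℂ, ∀ z ∈ unitDisk, θ z = c

/-- Membership in the star-invariant subspace `K^p_θ`:  `f ∈ H^p` and the function
`ζ ↦ conj ζ * conj (f ζ) * θ ζ` on the circle coincides `m`-a.e. with (the boundary values of)
an `H^p` function. -/
def MemKp (p : ℝ≥0∞) (θ f : ℂ → ℂ) : Prop :=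
  MemHp p f ∧ ∃ h : ℂ → ℂ, MemHp p h ∧
    ∀ᵐ ζ ∂circleMeasure, h ζ = (starRingEnd ℂ) ζ * (starRingEnd ℂ) (f ζ) * θ ζ

/-- `u ∈ Re H^p`. -/
def MemReHp (p : ℝ≥0∞) (u : ℂ → ℝ) : Prop :=
  ∃ f : ℂ → ℂ, MemHp p f ∧ ∀ᵐ ζ ∂circleMeasure, u ζ = (f ζ).re

/-- `u ∈ Re K^p_θ`. -/
def MemReKp (p : ℝ≥0∞) (θ : ℂ → ℂ) (u : ℂ → ℝ) : Prop :=
  ∃ f : ℂ → ℂ, MemKp p θ f ∧ ∀ᵐ ζ ∂circleMeasure, u ζ = (f ζ).re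

/-!
On the circle the hypothesis reads `θ · conj g = φ · g`, so that
`conj ζ · conj (g h) · θ = g · (conj ζ · conj h · φ)`: multiplication by `g` maps `K^p_φ` into
`K^p_θ`, and likewise multiplication by `1/g` maps `K^p_θ` into `K^p_φ`. Both are multiplications
by `H^∞` functions, which preserve `H^p`. Finally `g` has no zeros in the disk: `g · (1/g)` is a
continuous `{0, 1}`-valued function on the connected disk, and it is not `0` everywhere because the
boundary values of `g` are nonzero almost everywhere.
-/

open ComplexConjugate

instance : IsProbabilityMeasure circleMeasure := by
  constructor
  rw [circleMeasure, Measure.smul_apply, Measure.map_apply (by fun_prop) MeasurableSet.univ,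
    preimage_univ, Measure.restrict_apply_univ, Real.volume_Ioc, sub_zero, smul_eq_mul]
  exact ENNReal.inv_mul_cancel (by simp [Real.pi_pos]) ENNReal.ofReal_ne_top

lemma circleMeasure_ae_norm_eq_one : ∀ᵐ ζ ∂circleMeasure, ‖ζ‖ = 1 := by
  rw [Filter.eventually_iff, mem_ae_iff]
  have hS : MeasurableSet {ζ : ℂ | ‖ζ‖ = 1}ᶜ :=
    (measurableSet_eq_fun (by fun_prop) measurable_const).compl
  rw [circleMeasure, Measure.smul_apply, Measure.map_apply (by fun_prop) hS]
  have : (fun t : ℝ => Complex.exp (t * Complex.I)) ⁻¹' {ζ : ℂ | ‖ζ‖ = 1}ᶜ = ∅ := by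
    ext t; simp [Complex.norm_exp_ofReal_mul_I]
  simp [this]

lemma ofReal_mul_mem_unitDisk {r : ℝ} (hr : r ∈ Ioo (0 : ℝ) 1) {ζ : ℂ} (hζ : ‖ζ‖ = 1) :
    (r : ℂ) * ζ ∈ unitDisk := by
  simpa [unitDisk, hζ, abs_of_pos hr.1] using hr.2

namespace IsBoundaryValue

variable {f f₁ f₂ g g₁ g₂ : ℂ → ℂ}

lemma congr (h : IsBoundaryValue f₁ g₁) (hD : EqOn f f₁ unitDisk)
    (hT : g =ᵐ[circleMeasure] g₁) : IsBoundaryValue f g := by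
  filter_upwards [circleMeasure_ae_norm_eq_one, h, hT] with ζ hζ hlim hgζ
  rw [hgζ]
  refine hlim.congr' ?_
  filter_upwards [Ioo_mem_nhdsLT one_pos] with r hr
  exact (hD (ofReal_mul_mem_unitDisk hr hζ)).symm

lemma mul (h₁ : IsBoundaryValue f₁ g₁) (h₂ : IsBoundaryValue f₂ g₂) :
    IsBoundaryValue (fun z => f₁ z * f₂ z) (fun ζ => g₁ ζ * g₂ ζ) := by
  filter_upwards [h₁, h₂] with ζ hζ₁ hζ₂ using hζ₁.mul hζ₂

lemma ae_eq (h₁ : IsBoundaryValue f g₁) (h₂ : IsBoundaryValue f g₂) :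
    g₁ =ᵐ[circleMeasure] g₂ := by
  filter_upwards [h₁, h₂] with ζ using tendsto_nhds_unique

end IsBoundaryValue

section HardyNorm

variable {p : ℝ≥0∞} {f f₁ k h : ℂ → ℂ}

lemma nnnorm_le_hNorm_top {z : ℂ} (hz : z ∈ unitDisk) : (‖f z‖₊ : ℝ≥0∞) ≤ hNorm ⊤ f := by
  rw [hNorm, if_pos rfl]
  exact le_iSup (fun w : unitDisk => (‖f w‖₊ : ℝ≥0∞)) ⟨z, hz⟩

lemma hNorm_of_ne_top (hp : p ≠ ⊤) (f : ℂ → ℂ) :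
    hNorm p f =
      ⨆ r : Ioo (0 : ℝ) 1, eLpNorm' (fun ζ => f ((r : ℝ) * ζ)) p.toReal circleMeasure := by
  rw [hNorm, if_neg hp]
  rfl

lemma hNorm_congr (hD : EqOn f f₁ unitDisk) : hNorm p f = hNorm p f₁ := by
  by_cases hp : p = ⊤
  · subst hp
    simp only [hNorm, if_true]
    exact iSup_congr fun z => by rw [hD z.2]
  · simp only [hNorm_of_ne_top hp]
    refine iSup_congr fun r => eLpNorm'_congr_ae ?_
    filter_upwards [circleMeasure_ae_norm_eq_one] with ζ hζ
      using hD (ofReal_mul_mem_unitDisk r.2 hζ)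

lemma hNorm_mul_le (hp : p ≠ 0) (hk : hNorm ⊤ k ≠ ⊤) :
    hNorm p (fun z => k z * h z) ≤ hNorm ⊤ k * hNorm p h := by
  by_cases hpt : p = ⊤
  · subst hpt
    conv_lhs => rw [hNorm, if_pos rfl]
    refine iSup_le fun z => ?_
    rw [nnnorm_mul, ENNReal.coe_mul]
    exact mul_le_mul' (nnnorm_le_hNorm_top z.2) (nnnorm_le_hNorm_top z.2)
  · simp only [hNorm_of_ne_top hpt]
    refine iSup_le fun r => ?_
    have hbound : ∀ᵐ ζ ∂circleMeasure,
        ‖k (r * ζ) * h (r * ζ)‖₊ ≤ (hNorm ⊤ k).toNNReal * ‖h (r * ζ)‖₊ := by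
      filter_upwards [circleMeasure_ae_norm_eq_one] with ζ hζ
      rw [nnnorm_mul]
      gcongr
      exact ENNReal.toNNReal_le_toNNReal ENNReal.coe_ne_top hk |>.mpr
        (nnnorm_le_hNorm_top (ofReal_mul_mem_unitDisk r.2 hζ))
    calc _ ≤ (hNorm ⊤ k).toNNReal • eLpNorm' (fun ζ => h (r * ζ)) p.toReal circleMeasure :=
          eLpNorm'_le_nnreal_smul_eLpNorm'_of_ae_le_mul hbound (ENNReal.toReal_pos hp hpt)
      _ ≤ _ := by
          rw [ENNReal.smul_def, smul_eq_mul, ENNReal.coe_toNNReal hk]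
          gcongr
          exact le_iSup (fun r : Ioo (0 : ℝ) 1 =>
            eLpNorm' (fun ζ => h ((r : ℝ) * ζ)) p.toReal circleMeasure) r

end HardyNorm

namespace MemHp

variable {p : ℝ≥0∞} {f f₁ k h : ℂ → ℂ}

lemma congr (hf : MemHp p f₁) (hD : EqOn f f₁ unitDisk) (hT : f =ᵐ[circleMeasure] f₁) :
    MemHp p f :=
  ⟨hf.1.congr hD, hNorm_congr hD ▸ hf.2.1, hf.2.2.congr hD hT⟩

lemma mul (hp : p ≠ 0) (hk : MemHp ⊤ k) (hh : MemHp p h) : MemHp p (fun z => k z * h z) :=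
  ⟨hk.1.mul hh.1, (hNorm_mul_le hp hk.2.1.ne).trans_lt (mul_lt_top hk.2.1 hh.2.1),
    hk.2.2.mul hh.2.2⟩

end MemHp

namespace MemKp

variable {p : ℝ≥0∞} {θ φ f f₁ k h : ℂ → ℂ}

lemma congr (hf : MemKp p θ f₁) (hD : EqOn f f₁ unitDisk) (hT : f =ᵐ[circleMeasure] f₁) :
    MemKp p θ f := by
  obtain ⟨hf₁, t, ht, hte⟩ := hf
  refine ⟨hf₁.congr hD hT, t, ht, ?_⟩
  filter_upwards [hte, hT] with ζ htζ hfζ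
  rw [htζ, hfζ]

lemma mul (hp : p ≠ 0) (hh : MemKp p φ h) (hk : MemHp ⊤ k)
    (hrel : ∀ᵐ ζ ∂circleMeasure, θ ζ * conj (k ζ) = φ ζ * k ζ) :
    MemKp p θ (fun z => k z * h z) := by
  obtain ⟨hh, t, ht, hte⟩ := hh
  refine ⟨hk.mul hp hh, fun z => k z * t z, hk.mul hp ht, ?_⟩
  filter_upwards [hte, hrel] with ζ htζ hrelζ
  rw [htζ, map_mul]
  linear_combination (-(conj ζ * conj (h ζ))) * hrelζ

end MemKp

theorem IsPreconnected.ne_zero_of_continuousOn_inv {X G₀ : Type*} [TopologicalSpace X]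
    [GroupWithZero G₀] [TopologicalSpace G₀] [ContinuousMul G₀] [T1Space G₀] {U : Set X}
    (hU : IsPreconnected U) {g : X → G₀} (hg : ContinuousOn g U)
    (hginv : ContinuousOn (fun x => (g x)⁻¹) U) {x₀ : X} (hx₀ : x₀ ∈ U) (hg₀ : g x₀ ≠ 0)
    {x : X} (hx : x ∈ U) : g x ≠ 0 := by
  have hmaps : MapsTo (fun y => g y * (g y)⁻¹) U {0, 1} := fun y _ => by
    by_cases hy : g y = 0 <;> simp [hy]
  have hconst := hU.constant_of_mapsTo (isDiscrete_iff_discreteTopology.mpr inferInstance)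
    (hg.mul hginv) hmaps hx hx₀
  intro h0
  simp [h0, hg₀] at hconst

theorem MemHp.ne_zero_of_ae_ne_zero {p : ℝ≥0∞} {g : ℂ → ℂ} (hg : MemHp p g)
    (hginv : DifferentiableOn ℂ (fun z => (g z)⁻¹) unitDisk)
    (hT : ∀ᵐ ζ ∂circleMeasure, g ζ ≠ 0) {z : ℂ} (hz : z ∈ unitDisk) : g z ≠ 0 := by
  obtain ⟨z₀, hz₀, hg₀⟩ : ∃ z₀ ∈ unitDisk, g z₀ ≠ 0 := by
    by_contra! h0
    have hzero : IsBoundaryValue g 0 :=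
      IsBoundaryValue.congr (f₁ := 0) (Filter.Eventually.of_forall fun _ => tendsto_const_nhds)
        h0 Filter.EventuallyEq.rfl
    obtain ⟨ζ, hne, heq⟩ := (hT.and (hg.2.2.ae_eq hzero)).exists
    exact hne heq
  exact (convex_ball (0 : ℂ) 1).isPreconnected.ne_zero_of_continuousOn_inv hg.1.continuousOn
    hginv.continuousOn hz₀ hg₀ hz

/-- Lemma 2.2: if `θ/φ = g/conj g` a.e. on `T` with `g, 1/g ∈ H^∞`, then `K^p_θ = g·K^p_φ`
for all `1 ≤ p ≤ ∞`. -/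
theorem Kp_eq_smul_Kp (θ φ g : ℂ → ℂ) (hθ : IsInner θ) (hφ : IsInner φ)
    (hg : MemHp ⊤ g) (hginv : MemHp ⊤ (fun z => (g z)⁻¹))
    (hquot : ∀ᵐ ζ ∂circleMeasure, θ ζ / φ ζ = g ζ / (starRingEnd ℂ) (g ζ)) :
    ∀ p : ℝ≥0∞, 1 ≤ p → ∀ f : ℂ → ℂ,
      MemKp p θ f ↔
        ∃ h : ℂ → ℂ, MemKp p φ h ∧ (∀ z ∈ unitDisk, f z = g z * h z) ∧
          ∀ᵐ ζ ∂circleMeasure, f ζ = g ζ * h ζ := by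
  have hθφ : ∀ᵐ ζ ∂circleMeasure, θ ζ ≠ 0 ∧ φ ζ ≠ 0 := by
    filter_upwards [hθ.2, hφ.2] with ζ hθζ hφζ
    exact ⟨norm_ne_zero_iff.mp (by simp [hθζ]), norm_ne_zero_iff.mp (by simp [hφζ])⟩
  have hgT : ∀ᵐ ζ ∂circleMeasure, g ζ ≠ 0 := by
    filter_upwards [hθφ, hquot] with ζ ⟨hθζ, hφζ⟩ hq h0
    simp [h0, hθζ, hφζ] at hq
  have hrel : ∀ᵐ ζ ∂circleMeasure, θ ζ * conj (g ζ) = φ ζ * g ζ := by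
    filter_upwards [hθφ, hgT, hquot] with ζ ⟨_, hφζ⟩ hgζ hq
    rwa [div_eq_div_iff hφζ ((map_ne_zero _).mpr hgζ), mul_comm (g ζ)] at hq
  have hrel_inv : ∀ᵐ ζ ∂circleMeasure, φ ζ * conj (g ζ)⁻¹ = θ ζ * (g ζ)⁻¹ := by
    filter_upwards [hrel, hgT] with ζ hrelζ hgζ
    have hcgζ : conj (g ζ) ≠ 0 := (map_ne_zero _).mpr hgζ
    rw [map_inv₀]
    field_simp
    rw [← hrelζ, mul_comm]
  intro p hp f
  have hp0 : p ≠ 0 := (zero_lt_one.trans_le hp).ne'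
  constructor
  · intro hf
    refine ⟨fun z => (g z)⁻¹ * f z, hf.mul hp0 hginv hrel_inv, fun z hz => ?_, ?_⟩
    · exact (mul_inv_cancel_left₀ (hg.ne_zero_of_ae_ne_zero hginv.1 hgT hz) _).symm
    · filter_upwards [hgT] with ζ hgζ using (mul_inv_cancel_left₀ hgζ _).symm
  · rintro ⟨h, hh, hD, hT⟩
    exact (hh.mul hp0 hg hrel).congr hD hT
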